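/- arXiv:1412.7938 — 4 statements merged into one kernel-verified Lean document; each statement's English description precedes it below -/
import Mathlib

section
/- Let W = I + (√(1−γ) − 1) e_i e_iᵀ for γ ∈ (0,1). Then the i-th leverage score of WM equals (1−γ) μ_i(M) / (1 − γ μ_i(M)), which is at most μ_i(M). -/
/-!
The columns of `U'` span `W · col(U)`, so `U' U'ᵀ` is the orthogonal projection `A (Aᵀ A)⁻¹ Aᵀ`
with `A = W U`. Since `Uᵀ U = 1`, the Gram matrix `Aᵀ A = 1 - γ u uᵀ` (with `u` the `i`-th row of
`U`, `uᵀ u = μ`) is a rank-one perturbation of the identity, inverted by Sherman–Morrison as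
`1 + γ / (1 - γ μ) · u uᵀ`. The `i`-th row of `A` is `√(1 - γ) u`, whence
`(U' U'ᵀ)ᵢᵢ = (1 - γ) (μ + γ μ² / (1 - γ μ)) = (1 - γ) μ / (1 - γ μ)`.
-/

open Matrix

namespace Matrix

variable {R : Type*} [CommRing R] {m n k l : Type*}

lemma range_mulVecLin_mul_le [Fintype k] [Fintype l] (A : Matrix m k R) (B : Matrix k l R) :
    LinearMap.range (A * B).mulVecLin ≤ LinearMap.range A.mulVecLin := by
  rw [mulVecLin_mul]
  exact LinearMap.range_comp_le_range _ _

lemma range_mulVecLin_mul_congr [Fintype m] [Fintype k] [Fintype n] (W : Matrix l m R)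
    {A : Matrix m k R} {B : Matrix m n R}
    (h : LinearMap.range A.mulVecLin = LinearMap.range B.mulVecLin) :
    LinearMap.range (W * A).mulVecLin = LinearMap.range (W * B).mulVecLin := by
  rw [mulVecLin_mul, mulVecLin_mul, LinearMap.range_comp, LinearMap.range_comp, h]

section Projection

variable [Fintype m]

lemma mulVec_eq_self_of_mem_range {P : Matrix m m R} (hP : IsIdempotentElem P) {x : m → R}
    (hx : x ∈ LinearMap.range P.mulVecLin) : P *ᵥ x = x := by
  obtain ⟨y, rfl⟩ := hx
  rw [mulVecLin_apply, mulVec_mulVec, hP.eq]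

lemma mul_eq_right_of_range_le [Fintype l] {P : Matrix m m R} {Q : Matrix m l R}
    (hP : IsIdempotentElem P)
    (h : LinearMap.range Q.mulVecLin ≤ LinearMap.range P.mulVecLin) : P * Q = Q :=
  ext_iff_mulVec.2 fun v => by
    rw [← mulVec_mulVec]
    exact mulVec_eq_self_of_mem_range hP (h ⟨v, rfl⟩)

lemma eq_of_range_mulVecLin_eq {P Q : Matrix m m R} (hPs : P.IsSymm) (hP : IsIdempotentElem P)
    (hQs : Q.IsSymm) (hQ : IsIdempotentElem Q)
    (h : LinearMap.range P.mulVecLin = LinearMap.range Q.mulVecLin) : P = Q := by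
  have hQP : Q * P = P := mul_eq_right_of_range_le hQ h.le
  have hPQ : P * Q = Q := mul_eq_right_of_range_le hP h.ge
  calc P = (Q * P)ᵀ := by rw [hQP, hPs.eq]
    _ = P * Q := by rw [transpose_mul, hPs.eq, hQs.eq]
    _ = Q := hPQ

end Projection

lemma isSymm_mul_mul_transpose [Fintype k] {A : Matrix m k R} {H : Matrix k k R}
    (hH : H.IsSymm) : (A * H * Aᵀ).IsSymm := by
  rw [IsSymm, transpose_mul, transpose_mul, transpose_transpose, hH.eq, Matrix.mul_assoc]

section GramInverse

variable [Fintype m] [Fintype k] [DecidableEq k] {A : Matrix m k R} {H : Matrix k k R}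

lemma mul_mul_transpose_mul_eq_self (hAH : Aᵀ * A * H = 1) : A * H * Aᵀ * A = A := by
  have hHA : H * (Aᵀ * A) = 1 := mul_eq_one_comm.1 hAH
  rw [Matrix.mul_assoc, Matrix.mul_assoc, hHA, Matrix.mul_one]

lemma isIdempotentElem_mul_mul_transpose (hAH : Aᵀ * A * H = 1) :
    IsIdempotentElem (A * H * Aᵀ) := by
  rw [IsIdempotentElem]
  simp only [← Matrix.mul_assoc]
  rw [mul_mul_transpose_mul_eq_self hAH]

lemma range_mulVecLin_mul_mul_transpose (hAH : Aᵀ * A * H = 1) :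
    LinearMap.range (A * H * Aᵀ).mulVecLin = LinearMap.range A.mulVecLin := by
  refine le_antisymm ?_ ?_
  · rw [Matrix.mul_assoc]
    exact range_mulVecLin_mul_le _ _
  · conv_lhs => rw [← mul_mul_transpose_mul_eq_self hAH]
    exact range_mulVecLin_mul_le _ _

/-- Both sides are the orthogonal projection onto the column space of `A`. -/
lemma mul_transpose_eq_mul_mul_transpose [DecidableEq l] [Fintype l] {U : Matrix m l R}
    (hU : Uᵀ * U = 1) (hH : H.IsSymm) (hAH : Aᵀ * A * H = 1)
    (h : LinearMap.range U.mulVecLin = LinearMap.range A.mulVecLin) :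
    U * Uᵀ = A * H * Aᵀ := by
  have hU1 : Uᵀ * U * 1 = 1 := by rw [Matrix.mul_one, hU]
  have key := eq_of_range_mulVecLin_eq (isSymm_mul_mul_transpose isSymm_one)
    (isIdempotentElem_mul_mul_transpose hU1) (isSymm_mul_mul_transpose hH)
    (isIdempotentElem_mul_mul_transpose hAH)
    (by rw [range_mulVecLin_mul_mul_transpose hU1, range_mulVecLin_mul_mul_transpose hAH, h])
  rwa [Matrix.mul_one] at key

end GramInverse

lemma mul_mul_transpose_apply [Fintype k] (A : Matrix m k R) (H : Matrix k k R) (i j : m) :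
    (A * H * Aᵀ) i j = A i ⬝ᵥ H *ᵥ A j := by
  simp only [mul_apply, transpose_apply, dotProduct, mulVec, Finset.mul_sum, Finset.sum_mul,
    mul_assoc]
  exact Finset.sum_comm

lemma mul_transpose_apply_self [Fintype k] (A : Matrix m k R) (i : m) :
    (A * Aᵀ) i i = A i ⬝ᵥ A i :=
  rfl

/-- Sherman–Morrison for a rank-one perturbation of the identity. -/
lemma one_add_smul_vecMulVec_mul_one_add_smul_vecMulVec [Fintype k] [DecidableEq k]
    (u v : k → R) {a b : R} (h : a + b + a * b * (v ⬝ᵥ u) = 0) :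
    (1 + a • vecMulVec u v) * (1 + b • vecMulVec u v) = 1 := by
  rw [add_mul, mul_add, mul_add, Matrix.mul_one, Matrix.one_mul, Matrix.mul_one, smul_mul_smul,
    vecMulVec_mul_vecMulVec, vecMulVec_smul, smul_smul, add_assoc, ← add_smul, ← add_smul,
    show b + (a + a * b * v ⬝ᵥ u) = 0 by linear_combination h, zero_smul, add_zero]

lemma transpose_mul_single_mul [Fintype m] [DecidableEq m] (U : Matrix m k R) (i : m) :
    Uᵀ * single i i (1 : R) * U = vecMulVec (U i) (U i) := by
  rw [single_eq_single_vecMulVec_single, Matrix.mul_vecMulVec, vecMulVec_mul, mulVec_single,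
    single_vecMul]
  simp only [MulOpposite.op_one, one_smul]
  rfl

section RowWeight

variable [Fintype m] [DecidableEq m]

def rowWeight (i : m) (t : R) : Matrix m m R := 1 + (t - 1) • single i i 1

lemma rowWeight_mul_apply_self (i : m) (t : R) (A : Matrix m k R) :
    (rowWeight i t * A) i = t • A i := by
  ext j
  rw [rowWeight, Matrix.add_mul, Matrix.one_mul, Matrix.smul_mul, add_apply, smul_apply,
    single_mul_apply_same, Pi.smul_apply, smul_eq_mul, smul_eq_mul]
  ring

lemma transpose_rowWeight_mul_self (i : m) (t : R) :
    (rowWeight i t)ᵀ * rowWeight i t = 1 + (t ^ 2 - 1) • single i i 1 := by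
  simp only [rowWeight, transpose_add, transpose_one, transpose_smul, transpose_single, add_mul,
    mul_add, Matrix.one_mul, smul_mul_smul, single_mul_single_same, mul_one]
  rw [add_assoc, ← add_smul, ← add_smul]
  congr 2
  ring

lemma gram_rowWeight_mul [Fintype k] [DecidableEq k] {U : Matrix m k R} (hU : Uᵀ * U = 1)
    (i : m) (t : R) :
    (rowWeight i t * U)ᵀ * (rowWeight i t * U) = 1 + (t ^ 2 - 1) • vecMulVec (U i) (U i) := by
  rw [transpose_mul, Matrix.mul_assoc, ← Matrix.mul_assoc _ _ U, transpose_rowWeight_mul_self,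
    Matrix.add_mul, Matrix.mul_add, Matrix.one_mul, hU, Matrix.smul_mul, Matrix.mul_smul,
    ← Matrix.mul_assoc, transpose_mul_single_mul]

end RowWeight

theorem mul_transpose_apply_self_of_range_eq_rowWeight_mul {K : Type*} [Field K] [Fintype m]
    [DecidableEq m] [Fintype k] [DecidableEq k] [Fintype l] [DecidableEq l] {U : Matrix m k K}
    {U' : Matrix m l K} (hU : Uᵀ * U = 1) (hU' : U'ᵀ * U' = 1) (i : m) (t : K)
    (h : LinearMap.range U'.mulVecLin = LinearMap.range (rowWeight i t * U).mulVecLin)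
    (hden : 1 + (t ^ 2 - 1) * (U * Uᵀ) i i ≠ 0) :
    (U' * U'ᵀ) i i = t ^ 2 * (U * Uᵀ) i i / (1 + (t ^ 2 - 1) * (U * Uᵀ) i i) := by
  have hμ := mul_transpose_apply_self U i
  set μ := (U * Uᵀ) i i
  set d := -(t ^ 2 - 1) / (1 + (t ^ 2 - 1) * μ)
  have hd : d * (1 + (t ^ 2 - 1) * μ) = -(t ^ 2 - 1) := div_mul_cancel₀ _ hden
  set H := 1 + d • vecMulVec (U i) (U i)
  have hinv : (rowWeight i t * U)ᵀ * (rowWeight i t * U) * H = 1 := by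
    rw [gram_rowWeight_mul hU]
    refine one_add_smul_vecMulVec_mul_one_add_smul_vecMulVec (U i) (U i) ?_
    rw [← hμ]
    linear_combination hd
  have hproj : U' * U'ᵀ = rowWeight i t * U * H * (rowWeight i t * U)ᵀ :=
    mul_transpose_eq_mul_mul_transpose hU'
      (isSymm_one.add (IsSymm.smul (transpose_vecMulVec _ _) d)) hinv h
  rw [hproj, mul_mul_transpose_apply, rowWeight_mul_apply_self, eq_div_iff hden]
  simp only [H, add_mulVec, one_mulVec, smul_mulVec, vecMulVec_mulVec, mulVec_smul,
    op_smul_eq_smul, dotProduct_add, dotProduct_smul, smul_dotProduct, smul_eq_mul, ← hμ]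
  linear_combination (t ^ 2 * μ ^ 2) * hd

end Matrix

/-- Rank-one row weighting: scaling row `i` of `M` by `√(1-γ)` changes the `i`-th
leverage score to `(1-γ) μ_i / (1 - γ μ_i)`, which is at most `μ_i`. -/
theorem leverage_after_row_weighting_self (n₁ n₂ k k' : ℕ)
    (M : Matrix (Fin n₁) (Fin n₂) ℝ) (γ : ℝ) (i : Fin n₁)
    (hγ0 : 0 < γ) (hγ1 : γ < 1)
    (U : Matrix (Fin n₁) (Fin k) ℝ) (U' : Matrix (Fin n₁) (Fin k') ℝ)
    (hU : Uᵀ * U = 1)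
    (hspan : LinearMap.range U.mulVecLin = LinearMap.range M.mulVecLin)
    (hμ : (U * Uᵀ) i i < 1)
    (W : Matrix (Fin n₁) (Fin n₁) ℝ)
    (hW : W = 1 + (Real.sqrt (1 - γ) - 1) • single i i (1 : ℝ))
    (hU' : U'ᵀ * U' = 1)
    (hspan' : LinearMap.range U'.mulVecLin = LinearMap.range (W * M).mulVecLin) :
    (U' * U'ᵀ) i i = (1 - γ) * (U * Uᵀ) i i / (1 - γ * (U * Uᵀ) i i) ∧
      (U' * U'ᵀ) i i ≤ (U * Uᵀ) i i := by
  replace hW : W = rowWeight i √(1 - γ) := hW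
  have hμ0 : 0 ≤ (U * Uᵀ) i i := mul_transpose_apply_self U i ▸ dotProduct_self_star_nonneg (U i)
  have hsq : √(1 - γ) ^ 2 = 1 - γ := Real.sq_sqrt (by linarith)
  have hden : 0 < 1 - γ * (U * Uᵀ) i i := by nlinarith
  have hentry : (U' * U'ᵀ) i i = (1 - γ) * (U * Uᵀ) i i / (1 - γ * (U * Uᵀ) i i) := by
    have h := mul_transpose_apply_self_of_range_eq_rowWeight_mul hU hU' i √(1 - γ)
      (hspan'.trans (hW ▸ range_mulVecLin_mul_congr _ hspan.symm)) (by rw [hsq]; linarith)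
    rw [h, hsq]
    congr 1
    ring
  refine ⟨hentry, ?_⟩
  rw [hentry, div_le_iff₀ hden]
  nlinarith [mul_nonneg (mul_nonneg hγ0.le hμ0) (sub_nonneg.mpr hμ.le)]
end

section
/- Let ρ > 1, let μ̂ ∈ (1 − 1/ρ, 1), set μ = μ̂ − 1/(2ρ) and γ = (ρ − 1/(μ̂ − 1/(2ρ)))/(ρ − 1). If the true leverage score μ_true satisfies μ_true ≥ μ and μ_true < 1, then the post-weighting leverage score (1−γ)μ_true/(1 − γ μ_true) lies in [1/ρ, μ_true). -/
/-!
Scaling a row of leverage `x` by `√(1 - γ)` gives it leverage `f_γ(x) = (1 - γ) x / (1 - γ x)`,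
which for `γ ∈ (0, 1]` is monotone in `x < 1` and below `x` on `(0, 1)`.
The step `γ = (ρ - 1/μ)/(ρ - 1)` is exactly the one with `f_γ(μ) = 1/ρ`, so every true leverage
`μ_true ≥ μ` lands at or above `1/ρ`.
-/

open Set

noncomputable section

namespace Leverage

def weighted (γ x : ℝ) : ℝ := (1 - γ) * x / (1 - γ * x)

def safeStep (ρ μ : ℝ) : ℝ := (ρ - 1 / μ) / (ρ - 1)

theorem weighted_monotoneOn {γ : ℝ} (hγ0 : 0 ≤ γ) (hγ1 : γ ≤ 1) :
    MonotoneOn (weighted γ) (Iio 1) := by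
  intro x hx y hy hxy
  have hden : ∀ z < (1 : ℝ), 0 < 1 - γ * z := fun z hz => by
    rcases le_or_gt z 0 with hz0 | hz0 <;> nlinarith
  unfold weighted
  rw [div_le_div_iff₀ (hden x hx) (hden y hy)]
  nlinarith [mul_nonneg (sub_nonneg.2 hγ1) (sub_nonneg.2 hxy)]

theorem weighted_lt_self {γ x : ℝ} (hγ0 : 0 < γ) (hγ1 : γ ≤ 1) (hx : x ∈ Ioo 0 1) :
    weighted γ x < x := by
  obtain ⟨hx0, hx1⟩ := hx
  have hden : 0 < 1 - γ * x := by nlinarith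
  unfold weighted
  rw [div_lt_iff₀ hden]
  nlinarith [mul_pos (mul_pos hγ0 hx0) (sub_pos.2 hx1)]

theorem weighted_safeStep_self {ρ μ : ℝ} (hρ0 : ρ ≠ 0) (hρ1 : ρ ≠ 1) (hμ0 : μ ≠ 0)
    (hμ1 : μ ≠ 1) : weighted (safeStep ρ μ) μ = 1 / ρ := by
  have hρ' : ρ - 1 ≠ 0 := sub_ne_zero.2 hρ1
  have hμ' : 1 - μ ≠ 0 := sub_ne_zero.2 (Ne.symm hμ1)
  have hnum : (1 - safeStep ρ μ) * μ = (1 - μ) / (ρ - 1) := by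
    unfold safeStep; field_simp; ring
  have hden : 1 - safeStep ρ μ * μ = ρ * (1 - μ) / (ρ - 1) := by
    unfold safeStep; field_simp; ring
  rw [weighted, hnum, hden]
  field_simp

theorem mem_Ioo_of_safeStep_lt_one {ρ μ : ℝ} (hρ : 1 < ρ) (h : safeStep ρ μ < 1) :
    μ ∈ Ioo 0 1 := by
  rw [safeStep, div_lt_one (by linarith)] at h
  have hμinv : 1 < μ⁻¹ := by rw [← one_div]; linarith
  have hμ0 : 0 < μ := inv_pos.1 (one_pos.trans hμinv)
  exact ⟨hμ0, (one_lt_inv₀ hμ0).1 hμinv⟩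

end Leverage

end

open Leverage in
theorem safe_weighting_large_leverage_general (ρ μtrue : ℝ) (hρ : 1 < ρ)
    (μ : ℝ)
    (γ : ℝ) (hγ : γ = (ρ - 1 / μ) / (ρ - 1))
    (hγ0 : 0 < γ) (hγ1 : γ < 1)
    (hlow : μ ≤ μtrue) (hhigh : μtrue < 1) :
    (1 - γ) * μtrue / (1 - γ * μtrue) ∈ Set.Ico (1 / ρ) μtrue := by
  change γ = safeStep ρ μ at hγ
  obtain ⟨hμ0, hμ1⟩ := mem_Ioo_of_safeStep_lt_one hρ (hγ ▸ hγ1)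
  refine ⟨?_, weighted_lt_self hγ0 hγ1.le ⟨hμ0.trans_le hlow, hhigh⟩⟩
  have hρ0 : ρ ≠ 0 := (zero_lt_one.trans hρ).ne'
  calc 1 / ρ = weighted γ μ := by rw [hγ, weighted_safeStep_self hρ0 hρ.ne' hμ0.ne' hμ1.ne]
    _ ≤ weighted γ μtrue :=
      weighted_monotoneOn hγ0.le hγ1.le (hlow.trans_lt hhigh) hhigh hlow

/-- Safe small-step weighting rule: with `ρ > 1`, estimate `μ̂ ∈ (1-1/ρ, 1)`,
`μ = μ̂ - 1/(2ρ)` and `γ = (ρ - 1/μ)/(ρ-1) ∈ (0,1)`, any true leverage score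
`μ_true ∈ [μ, 1)` is mapped by the weighting to a value in `[1/ρ, μ_true)`. -/
theorem safe_weighting_large_leverage (ρ μhat μtrue : ℝ) (hρ : 1 < ρ)
    (hμhat : μhat ∈ Set.Ioo (1 - 1 / ρ) 1)
    (μ : ℝ) (hμ : μ = μhat - 1 / (2 * ρ))
    (γ : ℝ) (hγ : γ = (ρ - 1 / μ) / (ρ - 1))
    (hγ0 : 0 < γ) (hγ1 : γ < 1)
    (hlow : μ ≤ μtrue) (hhigh : μtrue < 1) :
    (1 - γ) * μtrue / (1 - γ * μtrue) ∈ Set.Ico (1 / ρ) μtrue :=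
  safe_weighting_large_leverage_general ρ μtrue hρ μ γ hγ hγ0 hγ1 hlow hhigh
end

section
/- Define the ℓ₁ hinge loss L(μ) = ∑_{l} max{μ_l − μ*_l, 0} on leverage-score vectors. Suppose a rank-one row weighting on index i decreases μ_i by δ₁ > 0 and increases each μ_j (j ≠ i) by Δμ_j ≥ 0 with ∑_{j≠i} Δμ_j = δ₁, and assume μ_i stays ≥ μ*_i after weighting. Then the decrement in the loss equals ∑_{j ∈ J} min{Δμ_j, μ*_j − μ_j}, where J = { j ≠ i : Δμ_j > 0 and μ_j < μ*_j }; in particular the loss does not increase. -/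
/-!
Coordinate `i` stays above its target, so its hinge term drops by exactly `δ`. A coordinate
`j ≠ i` rising by `Δⱼ ≥ 0` has its hinge term grow by `Δⱼ` minus the part of `Δⱼ` absorbed below
the target, `min Δⱼ (μ*ⱼ - μⱼ)` when `μⱼ < μ*ⱼ`. Summing, the `Δⱼ` cancel `δ`.
-/

open Finset

lemma max_sub_zero_sub_max_sub_sub_zero {x t d : ℝ} (hd : 0 ≤ d) (h : t ≤ x - d) :
    max (x - t) 0 - max (x - d - t) 0 = d := by
  rw [max_eq_left (by linarith), max_eq_left (by linarith)]
  ring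

lemma max_sub_zero_sub_max_add_sub_zero {x t d : ℝ} (hd : 0 ≤ d) :
    max (x - t) 0 - max (x + d - t) 0 = (if 0 < d ∧ x < t then min d (t - x) else 0) - d := by
  simp only [max_def, min_def]
  split_ifs <;> grind

theorem l1_hinge_loss_decrement_general (n : ℕ) (μ μ' μstar Δ : Fin n → ℝ) (i : Fin n)
    (δ : ℝ)
    (hi : μ' i = μ i - δ)
    (hstar : μstar i ≤ μ' i)
    (hj : ∀ j, j ≠ i → μ' j = μ j + Δ j)
    (hΔ : ∀ j, j ≠ i → 0 ≤ Δ j)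
    (hsum : ∑ j ∈ univ.erase i, Δ j = δ) :
    (∑ l, max (μ l - μstar l) 0) - (∑ l, max (μ' l - μstar l) 0)
        = ∑ j ∈ univ.filter (fun j => j ≠ i ∧ 0 < Δ j ∧ μ j < μstar j),
            min (Δ j) (μstar j - μ j) ∧
      0 ≤ ∑ j ∈ univ.filter (fun j => j ≠ i ∧ 0 < Δ j ∧ μ j < μstar j),
            min (Δ j) (μstar j - μ j) := by
  have hδ : 0 ≤ δ := hsum ▸ sum_nonneg fun j hj => hΔ j (ne_of_mem_erase hj)
  have hJ : univ.filter (fun j => j ≠ i ∧ 0 < Δ j ∧ μ j < μstar j)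
      = (univ.erase i).filter (fun j => 0 < Δ j ∧ μ j < μstar j) := by
    ext j
    simp
  refine ⟨?_, sum_nonneg fun j hjJ => ?_⟩
  · have hrest : ∀ j ∈ univ.erase i, max (μ j - μstar j) 0 - max (μ' j - μstar j) 0
        = (if 0 < Δ j ∧ μ j < μstar j then min (Δ j) (μstar j - μ j) else 0) - Δ j := by
      intro j hjmem
      have hji := ne_of_mem_erase hjmem
      rw [hj j hji, max_sub_zero_sub_max_add_sub_zero (hΔ j hji)]
    rw [← sum_sub_distrib, ← add_sum_erase _ _ (mem_univ i), hi,
      max_sub_zero_sub_max_sub_sub_zero hδ (hi ▸ hstar), sum_congr rfl hrest, sum_sub_distrib,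
      hsum, hJ, sum_filter]
    ring
  · obtain ⟨-, hΔj, hμj⟩ := (mem_filter.mp hjJ).2
    exact le_min hΔj.le (sub_nonneg.mpr hμj.le)

/-- Decrement identity for the ℓ₁ hinge loss `L(ν) = ∑ₗ max{νₗ - μ*ₗ, 0}` under a
rank-one row weighting step: if `μᵢ` decreases by `δ > 0` (staying `≥ μ*ᵢ`) and each
`μⱼ` (`j ≠ i`) increases by `Δⱼ ≥ 0` with `∑_{j≠i} Δⱼ = δ`, then
`L(μ) - L(μ') = ∑_{j ∈ J} min{Δⱼ, μ*ⱼ - μⱼ} ≥ 0` where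
`J = {j ≠ i : Δⱼ > 0, μⱼ < μ*ⱼ}`. -/
theorem l1_hinge_loss_decrement (n : ℕ) (μ μ' μstar Δ : Fin n → ℝ) (i : Fin n)
    (δ : ℝ) (hδ : 0 < δ)
    (hi : μ' i = μ i - δ)
    (hstar : μstar i ≤ μ' i)
    (hj : ∀ j, j ≠ i → μ' j = μ j + Δ j)
    (hΔ : ∀ j, j ≠ i → 0 ≤ Δ j)
    (hsum : ∑ j ∈ univ.erase i, Δ j = δ) :
    (∑ l, max (μ l - μstar l) 0) - (∑ l, max (μ' l - μstar l) 0)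
        = ∑ j ∈ univ.filter (fun j => j ≠ i ∧ 0 < Δ j ∧ μ j < μstar j),
            min (Δ j) (μstar j - μ j) ∧
      0 ≤ ∑ j ∈ univ.filter (fun j => j ≠ i ∧ 0 < Δ j ∧ μ j < μstar j),
            min (Δ j) (μstar j - μ j) :=
  l1_hinge_loss_decrement_general n μ μ' μstar Δ i δ hi hstar hj hΔ hsum
end

section
/- Under the setting of the ℓ₁ hinge loss decrement identity, if additionally there exists j ≠ i with μ_j < μ*_j and Δμ_j > 0, then the loss strictly decreases: L(μ') < L(μ). -/
open Finset

/-!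
The hinge `t ↦ max t 0` is monotone and 1-Lipschitz, so raising a coordinate by `Δⱼ ≥ 0` raises its
term of the loss by at most `Δⱼ`, and by strictly less when the coordinate starts below its target.
Coordinate `i` ends on the linear branch of the hinge, so lowering it by `δ` lowers its term by at
least `δ`, which pays for the total increase `∑ Δⱼ = δ` elsewhere with something to spare.
-/

section Hinge

variable {α : Type*} [AddCommGroup α] [LinearOrder α] {a d : α}

theorem max_zero_add_le_max_add_zero (ha : 0 ≤ a) : max a 0 + d ≤ max (a + d) 0 := by
  rw [max_eq_left ha]
  exact le_max_left _ _

variable [IsOrderedAddMonoid α]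

theorem max_add_zero_le_max_zero_add (hd : 0 ≤ d) : max (a + d) 0 ≤ max a 0 + d :=
  max_le (add_le_add_left (le_max_left a 0) d) (add_nonneg (le_max_right a 0) hd)

theorem max_add_zero_lt_max_zero_add (ha : a < 0) (hd : 0 < d) : max (a + d) 0 < max a 0 + d := by
  rw [max_eq_right ha.le, zero_add]
  exact max_lt (add_lt_of_neg_left d ha) hd

theorem sum_max_sub_zero_lt_of_shift {ι : Type*} (s : Finset ι) (μ μ' μstar Δ : ι → α)
    (hshift : ∀ j ∈ s, μ' j = μ j + Δ j) (hΔ : ∀ j ∈ s, 0 ≤ Δ j)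
    (hex : ∃ j ∈ s, μ j < μstar j ∧ 0 < Δ j) :
    ∑ j ∈ s, max (μ' j - μstar j) 0 < ∑ j ∈ s, max (μ j - μstar j) 0 + ∑ j ∈ s, Δ j := by
  have hsub : ∀ j ∈ s, μ' j - μstar j = μ j - μstar j + Δ j := fun j hj => by
    rw [hshift j hj, add_sub_right_comm]
  rw [← sum_add_distrib]
  obtain ⟨j, hjs, hμj, hΔj⟩ := hex
  refine sum_lt_sum (fun k hk => ?_) ⟨j, hjs, ?_⟩
  · rw [hsub k hk]
    exact max_add_zero_le_max_zero_add (hΔ k hk)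
  · rw [hsub j hjs]
    exact max_add_zero_lt_max_zero_add (sub_neg.2 hμj) hΔj

end Hinge

theorem l1_hinge_loss_strict_decrease_general (n : ℕ) (μ μ' μstar Δ : Fin n → ℝ) (i : Fin n)
    (δ : ℝ)
    (hi : μ' i = μ i - δ)
    (hstar : μstar i ≤ μ' i)
    (hj : ∀ j, j ≠ i → μ' j = μ j + Δ j)
    (hΔ : ∀ j, j ≠ i → 0 ≤ Δ j)
    (hsum : ∑ j ∈ univ.erase i, Δ j = δ)
    (hex : ∃ j, j ≠ i ∧ μ j < μstar j ∧ 0 < Δ j) :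
    (∑ l, max (μ' l - μstar l) 0) < ∑ l, max (μ l - μstar l) 0 := by
  obtain ⟨j₀, hj₀i, hμj₀, hΔj₀⟩ := hex
  have hrest := sum_max_sub_zero_lt_of_shift (univ.erase i) μ μ' μstar Δ
    (fun j hj' => hj j (ne_of_mem_erase hj')) (fun j hj' => hΔ j (ne_of_mem_erase hj'))
    ⟨j₀, mem_erase.2 ⟨hj₀i, mem_univ j₀⟩, hμj₀, hΔj₀⟩
  have hdrop : max (μ' i - μstar i) 0 + δ ≤ max (μ i - μstar i) 0 := by
    have hμi : μ' i - μstar i + δ = μ i - μstar i := by rw [hi]; ring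
    simpa only [hμi] using max_zero_add_le_max_add_zero (d := δ) (sub_nonneg.2 hstar)
  rw [← add_sum_erase _ _ (mem_univ i),
    ← add_sum_erase _ (fun l => max (μ l - μstar l) 0) (mem_univ i)]
  linarith

/-- Strict decrease of the ℓ₁ hinge loss: under the rank-one row weighting step, if
additionally some `j ≠ i` has `μⱼ < μ*ⱼ` and `Δⱼ > 0`, then `L(μ') < L(μ)`. -/
theorem l1_hinge_loss_strict_decrease (n : ℕ) (μ μ' μstar Δ : Fin n → ℝ) (i : Fin n)
    (δ : ℝ) (hδ : 0 < δ)
    (hi : μ' i = μ i - δ)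
    (hstar : μstar i ≤ μ' i)
    (hj : ∀ j, j ≠ i → μ' j = μ j + Δ j)
    (hΔ : ∀ j, j ≠ i → 0 ≤ Δ j)
    (hsum : ∑ j ∈ univ.erase i, Δ j = δ)
    (hex : ∃ j, j ≠ i ∧ μ j < μstar j ∧ 0 < Δ j) :
    (∑ l, max (μ' l - μstar l) 0) < ∑ l, max (μ l - μstar l) 0 :=
  l1_hinge_loss_strict_decrease_general n μ μ' μstar Δ i δ hi hstar hj hΔ hsum hex
end
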